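/- Let A ∈ ℝ^{n×n} and B ∈ ℝ^{q×q} be symmetric with orthogonal eigendecompositions A = V Λ Vᵀ and B = W M Wᵀ. Then the Moore–Penrose pseudoinverse of (I_q ⊗ A) + (B ⊗ I_n) equals (W ⊗ V) D† (W ⊗ V)ᵀ, where D = (I_q ⊗ Λ) + (M ⊗ I_n) and D† inverts the nonzero diagonal entries of D and leaves zeros unchanged. -/
import Mathlib


open Matrix Kronecker

/-- With orthogonal eigendecompositions `A = VΛVᵀ`, `B = WMWᵀ`, the matrix
`(W ⊗ V) D† (W ⊗ V)ᵀ`, with `D = (I_q ⊗ Λ) + (M ⊗ I_n)` and `D†` the entrywise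
pseudoinverse of the diagonal, is the Moore–Penrose pseudoinverse of
`(I_q ⊗ A) + (B ⊗ I_n)` (it satisfies the four Penrose conditions). -/
theorem stmt_15 (n q : ℕ)
    (A V Λ : Matrix (Fin n) (Fin n) ℝ) (B W M : Matrix (Fin q) (Fin q) ℝ)
    (hA : A.IsSymm) (hB : B.IsSymm)
    (hV : Vᵀ * V = 1) (hW : Wᵀ * W = 1)
    (hΛ : Λ.IsDiag) (hM : M.IsDiag)
    (hAd : A = V * Λ * Vᵀ) (hBd : B = W * M * Wᵀ)
    (K D Ddag P : Matrix (Fin q × Fin n) (Fin q × Fin n) ℝ)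
    (hK : K = (1 : Matrix (Fin q) (Fin q) ℝ) ⊗ₖ A
        + B ⊗ₖ (1 : Matrix (Fin n) (Fin n) ℝ))
    (hD : D = (1 : Matrix (Fin q) (Fin q) ℝ) ⊗ₖ Λ
        + M ⊗ₖ (1 : Matrix (Fin n) (Fin n) ℝ))
    (hDdag : Ddag = Matrix.of fun (p r : Fin q × Fin n) =>
      if p = r then (if D p p ≠ 0 then (D p p)⁻¹ else 0) else 0)
    (hP : P = (W ⊗ₖ V) * Ddag * (W ⊗ₖ V)ᵀ) :
    K * P * K = K ∧ P * K * P = P ∧ (K * P).IsSymm ∧ (P * K).IsSymm := by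
  set U := W ⊗ₖ V with hU
  have hUt : Uᵀ = Wᵀ ⊗ₖ Vᵀ := (Matrix.kroneckerMap_transpose _ W V).symm
  have hUtU : Uᵀ * U = 1 := by
    rw [hUt, hU, ← Matrix.mul_kronecker_mul, hV, hW, Matrix.one_kronecker_one]
  have hUUt : U * Uᵀ = 1 := mul_eq_one_comm.mp hUtU
  have hVVt : V * Vᵀ = 1 := mul_eq_one_comm.mp hV
  have hWWt : W * Wᵀ = 1 := mul_eq_one_comm.mp hW
  -- K = U D Uᵀ
  have hKD : K = U * D * Uᵀ := by
    rw [hK, hD, hUt, hU, Matrix.mul_add, Matrix.add_mul]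
    simp only [← Matrix.mul_kronecker_mul, Matrix.mul_one]
    rw [hWWt, hVVt, ← hAd, ← hBd]
  -- D and Ddag as diagonal matrices
  set d : Fin q × Fin n → ℝ := fun p => D p p with hd
  have hDdiag : D.IsDiag := by
    rw [hD]
    exact (Matrix.isDiag_one.kronecker hΛ).add (hM.kronecker Matrix.isDiag_one)
  have hDeq : D = Matrix.diagonal d := by
    ext i j
    by_cases h : i = j
    · subst h; simp [Matrix.diagonal_apply_eq, hd]
    · rw [Matrix.diagonal_apply_ne _ h]; exact hDdiag h
  set e : Fin q × Fin n → ℝ := fun p => if d p ≠ 0 then (d p)⁻¹ else 0 with he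
  have hDdagEq : Ddag = Matrix.diagonal e := by
    rw [hDdag]
    ext i j
    by_cases h : i = j
    · subst h; simp [Matrix.diagonal_apply_eq, he, hd]
    · simp [Matrix.diagonal_apply_ne _ h, h]
  -- key diagonal identities
  have hDDdD : D * Ddag * D = D := by
    rw [hDeq, hDdagEq, Matrix.diagonal_mul_diagonal, Matrix.diagonal_mul_diagonal]
    ext i j
    rcases eq_or_ne i j with rfl | hij
    · simp only [Matrix.diagonal_apply_eq]
      by_cases h : d i = 0
      · simp [h]
      · rw [he]; simp only [ne_eq, h, not_false_iff, if_pos]; field_simp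
    · rw [Matrix.diagonal_apply_ne _ hij, Matrix.diagonal_apply_ne _ hij]
  have hDdDDd : Ddag * D * Ddag = Ddag := by
    rw [hDeq, hDdagEq, Matrix.diagonal_mul_diagonal, Matrix.diagonal_mul_diagonal]
    ext i j
    rcases eq_or_ne i j with rfl | hij
    · simp only [Matrix.diagonal_apply_eq]
      by_cases h : d i = 0
      · simp [he, h]
      · rw [he]; simp only [ne_eq, h, not_false_iff, if_pos]; field_simp
    · rw [Matrix.diagonal_apply_ne _ hij, Matrix.diagonal_apply_ne _ hij]
  -- sandwich multiplication
  have key : ∀ X Y : Matrix (Fin q × Fin n) (Fin q × Fin n) ℝ,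
      (U * X * Uᵀ) * (U * Y * Uᵀ) = U * (X * Y) * Uᵀ := by
    intro X Y
    calc (U * X * Uᵀ) * (U * Y * Uᵀ) = U * X * (Uᵀ * U) * (Y * Uᵀ) := by
          simp only [Matrix.mul_assoc]
      _ = U * (X * Y) * Uᵀ := by rw [hUtU, Matrix.mul_one]; simp only [Matrix.mul_assoc]
  have symmkey : ∀ X : Matrix (Fin q × Fin n) (Fin q × Fin n) ℝ,
      Xᵀ = X → (U * X * Uᵀ).IsSymm := by
    intro X hX
    show (U * X * Uᵀ)ᵀ = U * X * Uᵀ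
    rw [Matrix.transpose_mul, Matrix.transpose_mul, Matrix.transpose_transpose, hX,
      Matrix.mul_assoc]
  have hPU : P = U * Ddag * Uᵀ := hP
  refine ⟨?_, ?_, ?_, ?_⟩
  · rw [hKD, hPU, key, key, hDDdD]
  · rw [hKD, hPU, key, key, hDdDDd]
  · rw [hKD, hPU, key]
    refine symmkey _ ?_
    rw [hDeq, hDdagEq, Matrix.diagonal_mul_diagonal, Matrix.diagonal_transpose]
  · rw [hKD, hPU, key]
    refine symmkey _ ?_
    rw [hDeq, hDdagEq, Matrix.diagonal_mul_diagonal, Matrix.diagonal_transpose]
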